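/- arXiv:math/0602489 — 2 statements merged into one kernel-verified Lean document; each statement's English description precedes it below -/
import Mathlib

section
/- Let (A^•, d) be a cochain complex of real vector spaces with a right action of a group G by degree-preserving linear maps commuting with d, let ω ∈ A^m be G-invariant and exact, let 1 ≤ p ≤ m−1, assume every closed element of A^q is exact for q = m−p, …, m−1, and let φ_0,…,φ_p with φ_i ∈ C^i(G, A^{m−i−1}) satisfy ω = −dφ_0 and δ'φ_{i−1} + δ''φ_i = 0 for i = 1,…,p. Let ε : Z^{m−p−1} → ℝ be a linear functional on the space Z^{m−p−1} of closed elements of A^{m−p−1} such that ε vanishes on exact elements and ε(z·g) = ε(z) for every closed z and every g ∈ G (the model is integration over a singular cycle whose homology class is G-invariant). Then c(g_1,…,g_{p+1}) := ε(δ'φ_p(g_1,…,g_{p+1})) is a (p+1)-cocycle on G with values in the trivial G-module ℝ. Moreover, up to a coboundary in C^{p+1}(G,ℝ), the cocycle c does not depend on the choice of the sequence φ_0,…,φ_p. -/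
open scoped BigOperators

/-- Merge the `i`-th and `(i+1)`-st entries of a tuple of group elements by multiplication:
this produces the argument tuple `(g₁, …, g_i g_{i+1}, …, g_{p+1})` (0-indexed). -/
def mulIns {G : Type*} [Mul G] {p : ℕ} (g : Fin (p + 1) → G) (i : Fin p) : Fin p → G :=
  fun j =>
    if (j : ℕ) < (i : ℕ) then g j.castSucc
    else if (j : ℕ) = (i : ℕ) then g j.castSucc * g j.succ
    else g j.succ

/-- `δ'` : the differential of the standard complex of nonhomogeneous cochains of a group
`G` with values in a right `G`-module `A` (the right action being `act`):
`(Df)(g₁,…,g_{p+1}) = f(g₂,…,g_{p+1}) + ∑ (-1)^i f(g₁,…,g_i g_{i+1},…,g_{p+1})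
  + (-1)^{p+1} f(g₁,…,g_p)·g_{p+1}`. -/
def gd {G : Type*} [Mul G] {A : Type*} [AddCommGroup A] [Module ℝ A]
    (act : G → A →ₗ[ℝ] A) {p : ℕ} (f : (Fin p → G) → A) :
    (Fin (p + 1) → G) → A :=
  fun g =>
    f (Fin.tail g)
      + ∑ i : Fin p, ((-1 : ℝ) ^ ((i : ℕ) + 1)) • f (mulIns g i)
      + ((-1 : ℝ) ^ (p + 1)) • act (g (Fin.last p)) (f (Fin.init g))

/-- `δ''` : the second differential on `C^p(G, A^q)`,
`(δ''c)(g₁,…,g_p) = (−1)^p d (c (g₁,…,g_p))`. -/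
def gdd {G : Type*} {A : ℤ → Type*} [∀ q, AddCommGroup (A q)] [∀ q, Module ℝ (A q)]
    (d : ∀ q, A q →ₗ[ℝ] A (q + 1)) {p : ℕ} {q : ℤ} (c : (Fin p → G) → A q) :
    (Fin p → G) → A (q + 1) :=
  fun g => ((-1 : ℝ) ^ p) • d q (c g)

/-- Transport an element of a graded family along an equality of degrees. -/
def tr {A : ℤ → Type*} {q q' : ℤ} (h : q = q') (a : A q) : A q' := h ▸ a

section Nworld
variable {G : Type*} [Group G]

/-- ℕ-indexed contraction: merge entries `i` and `i+1` by multiplication. -/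
def cN (g : ℕ → G) (i : ℕ) : ℕ → G :=
  fun j => if j < i then g j else if j = i then g j * g (j + 1) else g (j + 1)

/-- ℕ-indexed shift (drop the first entry). -/
def shN (g : ℕ → G) : ℕ → G := fun j => g (j + 1)

lemma cN_shN (g : ℕ → G) (i : ℕ) : cN (shN g) i = shN (cN g (i + 1)) := by
  funext j
  simp only [cN, shN]
  split_ifs <;>
    first
      | rfl
      | omega
      | exact False.elim (by assumption)
      | (exfalso; omega)
      | (congr 1 <;> omega)
      | (congr 1 <;> first | omega | (congr 1 <;> omega))

lemma shN_cN_zero (g : ℕ → G) : shN (cN g 0) = shN (shN g) := by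
  funext j
  simp only [cN, shN]
  split_ifs <;>
    first
      | rfl
      | omega
      | exact False.elim (by assumption)
      | (congr 1 <;> omega)

lemma cN_cN (g : ℕ → G) (i j : ℕ) (hij : i ≤ j) :
    cN (cN g i) j = cN (cN g (j + 1)) i := by
  funext k
  simp only [cN]
  split_ifs <;>
    first
      | rfl
      | omega
      | exact False.elim (by assumption)
      | (rw [mul_assoc])
      | (congr 1 <;> omega)
      | (congr 1 <;> first | rfl | omega | (congr 1 <;> omega))

lemma cN_apply_ge (g : ℕ → G) (i j : ℕ) (h : i < j) : cN g i j = g (j + 1) := by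
  simp only [cN]; split_ifs <;> first | rfl | omega

lemma cN_apply_self (g : ℕ → G) (i : ℕ) : cN g i i = g i * g (i + 1) := by
  simp only [cN]; split_ifs <;> first | rfl | omega

lemma cN_eq_below (g : ℕ → G) (i p : ℕ) (hip : p ≤ i) : ∀ j < p, cN g i j = g j := by
  intro j hj
  simp only [cN]; split_ifs <;> first | rfl | omega

end Nworld

section Main
variable {G : Type*} [Group G] {A : Type*} [AddCommGroup A] [Module ℝ A]

/-- ℕ-indexed group-cochain differential. -/
def dN (act : G → A →ₗ[ℝ] A) (p : ℕ) (F : (ℕ → G) → A) : (ℕ → G) → A :=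
  fun g => F (shN g) + ∑ i ∈ Finset.range p, ((-1 : ℝ) ^ (i + 1)) • F (cN g i)
    + ((-1 : ℝ) ^ (p + 1)) • act (g p) (F g)

/-- `F` depends only on the first `p` coordinates. -/
def DepN (p : ℕ) (F : (ℕ → G) → A) : Prop :=
  ∀ g g' : ℕ → G, (∀ j < p, g j = g' j) → F g = F g'

lemma dN_dN (act : G → A →ₗ[ℝ] A)
    (hact_mul : ∀ (g h : G) (a : A), act (g * h) a = act h (act g a))
    (p : ℕ) (F : (ℕ → G) → A) (hF : DepN p F) :
    dN act (p + 1) (dN act p F) = 0 := by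
  funext g
  show (dN act p F) (shN g)
      + ∑ i ∈ Finset.range (p+1), ((-1:ℝ)^(i+1)) • (dN act p F) (cN g i)
      + ((-1:ℝ)^(p+1+1)) • act (g (p+1)) ((dN act p F) g) = 0
  have hsplit2 : ∑ i ∈ Finset.range (p+1), ((-1:ℝ)^(i+1)) • (dN act p F) (cN g i)
      = (∑ i ∈ Finset.range (p+1), ((-1:ℝ)^(i+1)) • F (shN (cN g i)))
        + (∑ i ∈ Finset.range (p+1), ∑ j ∈ Finset.range p,
            ((-1:ℝ)^(i+1) * (-1:ℝ)^(j+1)) • F (cN (cN g i) j))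
        + (∑ i ∈ Finset.range (p+1),
            ((-1:ℝ)^(i+1) * (-1:ℝ)^(p+1)) • act (cN g i p) (F (cN g i))) := by
    rw [← Finset.sum_add_distrib, ← Finset.sum_add_distrib]
    refine Finset.sum_congr rfl fun i _ => ?_
    simp only [dN, smul_add, Finset.smul_sum, smul_smul]
  have hsplit3 : ((-1:ℝ)^(p+1+1)) • act (g (p+1)) ((dN act p F) g)
      = ((-1:ℝ)^(p+1+1)) • act (g (p+1)) (F (shN g))
        + (∑ j ∈ Finset.range p,
            ((-1:ℝ)^(p+1+1) * (-1:ℝ)^(j+1)) • act (g (p+1)) (F (cN g j)))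
        + ((-1:ℝ)^(p+1+1) * (-1:ℝ)^(p+1)) • act (g (p+1)) (act (g p) (F g)) := by
    simp only [dN, map_add, map_sum, map_smul, smul_add, Finset.smul_sum, smul_smul]
  have hT4 : ∑ i ∈ Finset.range (p+1), ((-1:ℝ)^(i+1)) • F (shN (cN g i))
      = (- F (shN (shN g)))
        + ∑ i ∈ Finset.range p, (-((-1:ℝ)^(i+1))) • F (cN (shN g) i) := by
    rw [Finset.sum_range_succ']
    rw [shN_cN_zero, pow_one, neg_one_smul, add_comm]
    congr 1
    refine Finset.sum_congr rfl fun i _ => ?_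
    rw [cN_shN, pow_succ]
    congr 1
    ring
  have hT5 : ∑ i ∈ Finset.range (p+1), ∑ j ∈ Finset.range p,
      ((-1:ℝ)^(i+1) * (-1:ℝ)^(j+1)) • F (cN (cN g i) j) = 0 := by
    rw [← Finset.sum_product']
    refine Finset.sum_involution
      (fun a _ => if a.1 ≤ a.2 then (a.2 + 1, a.1) else (a.2, a.1 - 1))
      (fun a ha => ?_) (fun a ha _ => ?_) (fun a ha => ?_) (fun a ha => ?_)
    · obtain ⟨i, j⟩ := a
      by_cases hij : i ≤ j
      · simp only [hij, if_true]
        rw [cN_cN g i j hij, ← add_smul]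
        have : (-1:ℝ)^(i+1) * (-1:ℝ)^(j+1) + (-1:ℝ)^(j+1+1) * (-1:ℝ)^(i+1) = 0 := by
          rw [pow_succ ((-1:ℝ)) (j+1)]; ring
        rw [this, zero_smul]
      · simp only [hij, if_false]
        have hj : j ≤ i - 1 := by omega
        have hi : i - 1 + 1 = i := by omega
        rw [cN_cN g j (i-1) hj, hi, ← add_smul]
        have : (-1:ℝ)^(i+1) * (-1:ℝ)^(j+1) + (-1:ℝ)^(j+1) * (-1:ℝ)^i = 0 := by
          rw [pow_succ ((-1:ℝ)) i]; ring
        rw [this, zero_smul]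
    · obtain ⟨i, j⟩ := a
      by_cases hij : i ≤ j <;> simp only [hij, if_true, if_false] <;>
        (intro h; injection h with h1 h2; omega)
    · obtain ⟨i, j⟩ := a
      simp only [Finset.mem_product, Finset.mem_range] at ha ⊢
      by_cases hij : i ≤ j <;> simp only [hij, if_true, if_false] <;>
        exact ⟨by omega, by omega⟩
    · obtain ⟨i, j⟩ := a
      simp only [Finset.mem_product, Finset.mem_range] at ha
      by_cases hij : i ≤ j
      · simp only [hij, if_true]
        have h' : ¬ (j + 1 ≤ i) := by omega
        simp only [h', if_false]
        rfl
      · simp only [hij, if_false]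
        have h1 : j ≤ i - 1 := by omega
        simp only [h1, if_true]
        have : i - 1 + 1 = i := by omega
        simp [this]
  have hT6 : ∑ i ∈ Finset.range (p+1),
      ((-1:ℝ)^(i+1) * (-1:ℝ)^(p+1)) • act (cN g i p) (F (cN g i))
      = (∑ i ∈ Finset.range p,
          ((-1:ℝ)^(i+1) * (-1:ℝ)^(p+1)) • act (g (p+1)) (F (cN g i)))
        + act (g (p+1)) (act (g p) (F g)) := by
    rw [Finset.sum_range_succ]
    congr 1
    · refine Finset.sum_congr rfl fun i hi => ?_
      rw [cN_apply_ge g i p (Finset.mem_range.1 hi)]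
    · rw [cN_apply_self, hact_mul]
      have h1 : F (cN g p) = F g := hF _ _ (cN_eq_below g p p le_rfl)
      have h2 : (-1:ℝ)^(p+1) * (-1:ℝ)^(p+1) = 1 := by
        rw [← pow_add]
        exact Even.neg_one_pow ⟨p+1, by ring⟩
      rw [h1, h2, one_smul]
  rw [hsplit2, hsplit3, hT4, hT5, hT6]
  show F (shN (shN g)) + ∑ i ∈ Finset.range p, ((-1:ℝ)^(i+1)) • F (cN (shN g) i)
      + ((-1:ℝ)^(p+1)) • act ((shN g) p) (F (shN g)) + _ + _ = 0
  have hsh : (shN g) p = g (p+1) := rfl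
  have e1 : ((-1:ℝ)^(p+1+1)) = -((-1:ℝ)^(p+1)) := by rw [pow_succ]; ring
  have e4 : (-1:ℝ)^(p+1) * (-1:ℝ)^(p+1) = 1 := by
    rw [← pow_add]; exact Even.neg_one_pow ⟨p+1, by ring⟩
  have e5 : ∀ j : ℕ, (-1:ℝ)^(p+1+1) * (-1:ℝ)^(j+1) = -((-1:ℝ)^(j+1) * (-1:ℝ)^(p+1)) := by
    intro j; rw [pow_succ]; ring
  have e6 : (-1:ℝ)^(p+1+1) * (-1:ℝ)^(p+1) = -1 := by
    rw [pow_succ]; linear_combination -e4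
  rw [hsh]
  simp only [e5, e6]
  simp only [e1]
  simp only [neg_smul, one_smul, neg_one_smul]
  rw [Finset.sum_neg_distrib, Finset.sum_neg_distrib]
  match_scalars <;> first | ring1 | linear_combination -e4
end Main

section Transfer
variable {G : Type*} [Group G] {A : Type*} [AddCommGroup A] [Module ℝ A]

def liftN {p : ℕ} (f : (Fin p → G) → A) : (ℕ → G) → A :=
  fun g => f (fun j => g j)

lemma depN_liftN {p : ℕ} (f : (Fin p → G) → A) : DepN p (liftN f) := by
  intro g g' h
  unfold liftN
  congr 1
  funext j
  exact h j j.isLt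

lemma liftN_gd (act : G → A →ₗ[ℝ] A) {p : ℕ} (f : (Fin p → G) → A) :
    liftN (gd act f) = dN act p (liftN f) := by
  funext g
  show gd act f (fun j : Fin (p+1) => g j) = _
  simp only [gd, dN]
  have hA1 : f (Fin.tail (fun j : Fin (p+1) => g j)) = liftN f (shN g) := by
    unfold liftN; congr 1
  have hA2 : ∑ i : Fin p, ((-1:ℝ) ^ ((i:ℕ) + 1)) • f (mulIns (fun j : Fin (p+1) => g j) i)
      = ∑ i ∈ Finset.range p, ((-1:ℝ) ^ (i + 1)) • liftN f (cN g i) := by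
    rw [← Fin.sum_univ_eq_sum_range (fun k => ((-1:ℝ)^(k+1)) • liftN f (cN g k)) p]
    refine Finset.sum_congr rfl fun i _ => ?_
    rfl
  have hA3 : f (Fin.init (fun j : Fin (p+1) => g j)) = liftN f g := by
    unfold liftN; congr 1
  rw [hA1, hA2, hA3]
  rfl

lemma gd_gd (act : G → A →ₗ[ℝ] A)
    (hact_mul : ∀ (g h : G) (a : A), act (g * h) a = act h (act g a))
    {p : ℕ} (f : (Fin p → G) → A) :
    gd act (gd act f) = 0 := by
  have h1 : liftN (gd act (gd act f)) = 0 := by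
    rw [liftN_gd, liftN_gd, dN_dN act hact_mul p _ (depN_liftN f)]
  funext g0
  have h2 : gd act (gd act f) g0
      = liftN (gd act (gd act f)) (fun j => if h : j < p + 2 then g0 ⟨j, h⟩ else g0 ⟨0, by omega⟩) := by
    unfold liftN
    congr 1
    funext j
    simp [j.isLt]
  rw [h2, h1]
  rfl
end Transfer

section TrLemmas
variable {A : ℤ → Type*} [∀ q, AddCommGroup (A q)] [∀ q, Module ℝ (A q)]

lemma tr_inj {q q' : ℤ} (h : q = q') {a b : A q} (hab : tr (A := A) h a = tr h b) :
    a = b := by subst h; exact hab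

lemma tr_add {q q' : ℤ} (h : q = q') (a b : A q) :
    tr (A := A) h (a + b) = tr h a + tr h b := by subst h; rfl

lemma tr_smul {q q' : ℤ} (h : q = q') (r : ℝ) (a : A q) :
    tr (A := A) h (r • a) = r • tr h a := by subst h; rfl

lemma tr_neg {q q' : ℤ} (h : q = q') (a : A q) :
    tr (A := A) h (-a) = - tr h a := by subst h; rfl

lemma tr_sub {q q' : ℤ} (h : q = q') (a b : A q) :
    tr (A := A) h (a - b) = tr h a - tr h b := by subst h; rfl

lemma tr_zero {q q' : ℤ} (h : q = q') : tr (A := A) h (0 : A q) = 0 := by subst h; rfl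

lemma tr_tr {q q' q'' : ℤ} (h : q = q') (h' : q' = q'') (a : A q) :
    tr (A := A) h' (tr h a) = tr (h.trans h') a := by subst h; subst h'; rfl

lemma tr_eq_zero_iff {q q' : ℤ} (h : q = q') (a : A q) :
    tr (A := A) h a = 0 ↔ a = 0 := by subst h; exact Iff.rfl

lemma tr_eq_iff {q q' : ℤ} (h : q = q') (a : A q) (b : A q') :
    tr (A := A) h a = b ↔ a = tr h.symm b := by subst h; exact Iff.rfl

variable (d : ∀ q, A q →ₗ[ℝ] A (q + 1))

lemma d_tr {q q' : ℤ} (h : q = q') (h' : q + 1 = q' + 1) (a : A q) :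
    d q' (tr h a) = tr h' (d q a) := by subst h; rfl

variable {G : Type*} [Group G] (act : ∀ q, G → A q →ₗ[ℝ] A q)

lemma act_tr {q q' : ℤ} (h : q = q') (g : G) (a : A q) :
    act q' g (tr h a) = tr h (act q g a) := by subst h; rfl

lemma gd_tr {p : ℕ} {q q' : ℤ} (h : q = q') (f : (Fin p → G) → A q) :
    gd (act q') (fun gs => tr h (f gs)) = fun gs => tr h (gd (act q) f gs) := by
  subst h; rfl

end TrLemmas

section GdAlg
variable {G : Type*} [Group G] {A : Type*} [AddCommGroup A] [Module ℝ A]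
  {B : Type*} [AddCommGroup B] [Module ℝ B]

lemma gd_add (act : G → A →ₗ[ℝ] A) {p : ℕ} (f₁ f₂ : (Fin p → G) → A) :
    gd act (fun gs => f₁ gs + f₂ gs) = fun gs => gd act f₁ gs + gd act f₂ gs := by
  funext g
  simp only [gd, smul_add, map_add, Finset.sum_add_distrib]
  abel

lemma gd_smul (act : G → A →ₗ[ℝ] A) {p : ℕ} (r : ℝ) (f : (Fin p → G) → A) :
    gd act (fun gs => r • f gs) = fun gs => r • gd act f gs := by
  funext g
  simp only [gd, map_smul, smul_add, Finset.smul_sum, smul_smul, mul_comm]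

lemma gd_sub (act : G → A →ₗ[ℝ] A) {p : ℕ} (f₁ f₂ : (Fin p → G) → A) :
    gd act (fun gs => f₁ gs - f₂ gs) = fun gs => gd act f₁ gs - gd act f₂ gs := by
  funext g
  simp only [gd, smul_sub, map_sub, Finset.sum_sub_distrib]
  abel

lemma gd_zero (act : G → A →ₗ[ℝ] A) {p : ℕ} :
    gd act (fun _ : Fin p → G => (0 : A)) = 0 := by
  funext g
  simp [gd]

lemma gd_map (T : A →ₗ[ℝ] B) (actA : G → A →ₗ[ℝ] A) (actB : G → B →ₗ[ℝ] B)
    (hc : ∀ (g : G) (a : A), T (actA g a) = actB g (T a)) {p : ℕ} (f : (Fin p → G) → A) :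
    gd actB (fun gs => T (f gs)) = fun gs => T (gd actA f gs) := by
  funext g
  simp only [gd, map_add, map_sum, map_smul, hc]

end GdAlg

section Eps
variable {G : Type*} [Group G] {V W : Type*} [AddCommGroup V] [Module ℝ V]
  [AddCommGroup W] [Module ℝ W]

lemma eps_zero (D : V →ₗ[ℝ] W) (ε : V → ℝ)
    (hε_smul : ∀ (r : ℝ) (a : V), D a = 0 → ε (r • a) = r * ε a) : ε 0 = 0 := by
  have := hε_smul 0 0 (map_zero D)
  rwa [zero_smul, zero_mul] at this

lemma eps_sum (D : V →ₗ[ℝ] W) (ε : V → ℝ)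
    (hε_add : ∀ a b : V, D a = 0 → D b = 0 → ε (a + b) = ε a + ε b)
    (hε_smul : ∀ (r : ℝ) (a : V), D a = 0 → ε (r • a) = r * ε a)
    {ι : Type*} (s : Finset ι) (v : ι → V) (hv : ∀ i ∈ s, D (v i) = 0) :
    ε (∑ i ∈ s, v i) = ∑ i ∈ s, ε (v i) := by
  classical
  induction s using Finset.cons_induction with
  | empty => simpa using eps_zero D ε hε_smul
  | cons a s ha ih =>
    rw [Finset.sum_cons, Finset.sum_cons,
      hε_add _ _ (hv a (Finset.mem_cons_self a s))
        (by rw [map_sum]; exact Finset.sum_eq_zero fun i hi => hv i (Finset.mem_cons_of_mem hi)),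
      ih (fun i hi => hv i (Finset.mem_cons_of_mem hi))]

lemma eps_gd (D : V →ₗ[ℝ] W) (act : G → V →ₗ[ℝ] V) (ε : V → ℝ)
    (hε_add : ∀ a b : V, D a = 0 → D b = 0 → ε (a + b) = ε a + ε b)
    (hε_smul : ∀ (r : ℝ) (a : V), D a = 0 → ε (r • a) = r * ε a)
    (hε_inv : ∀ (g : G) (a : V), D a = 0 → ε (act g a) = ε a)
    (hact_closed : ∀ (g : G) (a : V), D a = 0 → D (act g a) = 0)
    {k : ℕ} (F : (Fin k → G) → V) (hF : ∀ gs, D (F gs) = 0) :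
    gd (fun _ : G => (LinearMap.id : ℝ →ₗ[ℝ] ℝ)) (fun gs => ε (F gs))
      = fun gs => ε (gd act F gs) := by
  funext g
  have hYc : ∀ i : Fin k, D (((-1:ℝ) ^ ((i:ℕ) + 1)) • F (mulIns g i)) = 0 := fun i => by
    rw [map_smul, hF, smul_zero]
  have hY : D (∑ i : Fin k, ((-1:ℝ) ^ ((i:ℕ) + 1)) • F (mulIns g i)) = 0 := by
    rw [map_sum]; exact Finset.sum_eq_zero fun i _ => hYc i
  have hZ0 : D (act (g (Fin.last k)) (F (Fin.init g))) = 0 := hact_closed _ _ (hF _)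
  have hZ : D (((-1:ℝ) ^ (k + 1)) • act (g (Fin.last k)) (F (Fin.init g))) = 0 := by
    rw [map_smul, hZ0, smul_zero]
  have hXY : D (F (Fin.tail g) + ∑ i : Fin k, ((-1:ℝ) ^ ((i:ℕ) + 1)) • F (mulIns g i)) = 0 := by
    rw [map_add, hF, hY, add_zero]
  have hEY : ε (∑ i : Fin k, ((-1:ℝ) ^ ((i:ℕ) + 1)) • F (mulIns g i))
      = ∑ i : Fin k, ((-1:ℝ) ^ ((i:ℕ) + 1)) * ε (F (mulIns g i)) := by
    rw [eps_sum D ε hε_add hε_smul _ _ (fun i _ => hYc i)]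
    exact Finset.sum_congr rfl fun i _ => hε_smul _ _ (hF _)
  have hEZ : ε (((-1:ℝ) ^ (k + 1)) • act (g (Fin.last k)) (F (Fin.init g)))
      = ((-1:ℝ) ^ (k + 1)) * ε (F (Fin.init g)) := by
    rw [hε_smul _ _ hZ0, hε_inv _ _ (hF _)]
  show ε (F (Fin.tail g)) + (∑ i : Fin k, ((-1:ℝ) ^ ((i:ℕ) + 1)) • ε (F (mulIns g i)))
      + ((-1:ℝ) ^ (k + 1)) • (LinearMap.id : ℝ →ₗ[ℝ] ℝ) (ε (F (Fin.init g)))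
      = ε (F (Fin.tail g) + (∑ i : Fin k, ((-1:ℝ) ^ ((i:ℕ) + 1)) • F (mulIns g i))
          + ((-1:ℝ) ^ (k + 1)) • act (g (Fin.last k)) (F (Fin.init g)))
  rw [hε_add _ _ hXY hZ, hε_add _ _ (hF _) hY, hEY, hEZ]
  simp [smul_eq_mul]

end Eps

/-- In the setting of the construction, let `ε` be a linear functional on
the space of closed elements of `A^{m−p−1}` which vanishes on exact elements and is
invariant under the `G`-action.  Then `c(g₁,…,g_{p+1}) = ε(δ'φ_p(g₁,…,g_{p+1}))` is a
`(p+1)`-cocycle on `G` with values in the trivial `G`-module `ℝ`, and up to a coboundary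
it does not depend on the choice of the sequence `φ₀, …, φ_p`. -/
theorem statement4 {G : Type*} [Group G] {A : ℤ → Type*}
    [∀ q, AddCommGroup (A q)] [∀ q, Module ℝ (A q)]
    (d : ∀ q, A q →ₗ[ℝ] A (q + 1))
    (act : ∀ q, G → A q →ₗ[ℝ] A q)
    (hdd : ∀ (q : ℤ) (a : A q), d (q + 1) (d q a) = 0)
    (hact_one : ∀ q : ℤ, act q 1 = LinearMap.id)
    (hact_mul : ∀ (q : ℤ) (g h : G) (a : A q), act q (g * h) a = act q h (act q g a))
    (hcomm : ∀ (q : ℤ) (g : G) (a : A q), d q (act q g a) = act (q + 1) g (d q a))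
    (m : ℤ) (p : ℕ) (hp : 1 ≤ p) (hpm : (p : ℤ) ≤ m - 1)
    (ω : A m)
    (hωinv : ∀ g : G, act m g ω = ω)
    (hωexact : ∃ η : A (m - 1), tr (by omega) (d (m - 1) η) = ω)
    (hexact : ∀ q : ℤ, m - p ≤ q → q ≤ m - 1 → ∀ a : A q, d q a = 0 →
        ∃ b : A (q - 1), tr (by omega) (d (q - 1) b) = a)
    (φ : ∀ i : ℕ, (Fin i → G) → A (m - i - 1))
    (hφ0 : ω = - tr (by omega) (d (m - (0 : ℕ) - 1) (φ 0 ![])))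
    (hφ : ∀ i : ℕ, i + 1 ≤ p →
        gd (act (m - i - 1)) (φ i)
          + (fun gs => tr (by omega) (gdd d (φ (i + 1)) gs)) = 0)
    -- ε : a linear functional on the closed elements Z^{m-p-1}, vanishing on exact
    -- elements and invariant under the G-action
    (ε : A (m - p - 1) → ℝ)
    (hε_add : ∀ a b : A (m - p - 1), d (m - p - 1) a = 0 → d (m - p - 1) b = 0 →
        ε (a + b) = ε a + ε b)
    (hε_smul : ∀ (r : ℝ) (a : A (m - p - 1)), d (m - p - 1) a = 0 →
        ε (r • a) = r * ε a)
    (hε_exact : ∀ b : A (m - p - 2), ε (tr (by omega) (d (m - p - 2) b)) = 0)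
    (hε_inv : ∀ (g : G) (a : A (m - p - 1)), d (m - p - 1) a = 0 →
        ε (act (m - p - 1) g a) = ε a) :
    -- c = ε ∘ δ'φ_p is a (p+1)-cocycle with values in the trivial G-module ℝ
    gd (fun _ : G => (LinearMap.id : ℝ →ₗ[ℝ] ℝ))
        (fun gs => ε (gd (act (m - p - 1)) (φ p) gs)) = 0
    -- and, up to a coboundary, it is independent of the choice of the sequence φ
    ∧ (∀ φ' : ∀ i : ℕ, (Fin i → G) → A (m - i - 1),
        (ω = - tr (by omega) (d (m - (0 : ℕ) - 1) (φ' 0 ![]))) →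
        (∀ i : ℕ, i + 1 ≤ p →
            gd (act (m - i - 1)) (φ' i)
              + (fun gs => tr (by omega) (gdd d (φ' (i + 1)) gs)) = 0) →
        ∃ b : (Fin p → G) → ℝ,
          (fun gs => ε (gd (act (m - p - 1)) (φ' p) gs))
            = (fun gs => ε (gd (act (m - p - 1)) (φ p) gs))
              + gd (fun _ : G => (LinearMap.id : ℝ →ₗ[ℝ] ℝ)) b) := by
  obtain ⟨n, rfl⟩ : ∃ n, p = n + 1 := ⟨p - 1, by omega⟩
  have hq : ∀ i : ℕ, (m - (↑(i+1) : ℤ) - 1) + 1 = m - (i : ℤ) - 1 := by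
    intro i; push_cast; ring
  have hq2 : ∀ i : ℕ, (m - (i : ℤ) - 2) + 1 = m - (i : ℤ) - 1 := by intro i; ring
  have hq3 : ∀ i : ℕ, m - (i : ℤ) - 2 = m - (↑(i+1) : ℤ) - 1 := by
    intro i; push_cast; ring
  have hsq : ∀ k : ℕ, ((-1:ℝ) ^ k) * ((-1:ℝ) ^ k) = 1 := by
    intro k; rw [← pow_add]; exact Even.neg_one_pow ⟨k, by ring⟩
  -- the action preserves closed elements
  have hact_closed : ∀ (q : ℤ) (g : G) (a : A q), d q a = 0 → d q (act q g a) = 0 := by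
    intro q g a ha
    rw [hcomm, ha, map_zero]
  -- `key` : the relation δ'χᵢ + δ''χᵢ₊₁ = 0 determines d ∘ χᵢ₊₁
  have key : ∀ (χ : ∀ i : ℕ, (Fin i → G) → A (m - i - 1)) (i : ℕ),
      (gd (act (m - i - 1)) (χ i)
        + (fun gs => tr (hq i) (gdd d (χ (i+1)) gs)) = 0) →
      ∀ gs, d (m - (↑(i+1) : ℤ) - 1) (χ (i+1) gs)
        = tr (hq i).symm (((-1:ℝ) ^ (i+2)) • gd (act (m - i - 1)) (χ i) gs) := by
    intro χ i hrel gs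
    have h1 : gd (act (m - i - 1)) (χ i) gs + tr (hq i) (gdd d (χ (i+1)) gs) = 0 := by
      have := congrFun hrel gs
      simpa using this
    have h2 : tr (hq i) (((-1:ℝ) ^ (i+1)) • d (m - (↑(i+1) : ℤ) - 1) (χ (i+1) gs))
        = - gd (act (m - i - 1)) (χ i) gs := eq_neg_of_add_eq_zero_right h1
    have h3 : ((-1:ℝ) ^ (i+1)) • d (m - (↑(i+1) : ℤ) - 1) (χ (i+1) gs)
        = tr (hq i).symm (- gd (act (m - i - 1)) (χ i) gs) :=
      (tr_eq_iff (hq i) _ _).mp h2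
    have h4 : d (m - (↑(i+1) : ℤ) - 1) (χ (i+1) gs)
        = ((-1:ℝ) ^ (i+1)) • tr (hq i).symm (- gd (act (m - i - 1)) (χ i) gs) := by
      calc d (m - (↑(i+1) : ℤ) - 1) (χ (i+1) gs)
          = (((-1:ℝ) ^ (i+1)) * ((-1:ℝ) ^ (i+1))) • d (m - (↑(i+1) : ℤ) - 1) (χ (i+1) gs) := by
            rw [hsq, one_smul]
        _ = ((-1:ℝ) ^ (i+1)) • (((-1:ℝ) ^ (i+1)) • d (m - (↑(i+1) : ℤ) - 1) (χ (i+1) gs)) := by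
            rw [mul_smul]
        _ = _ := by rw [h3]
    rw [h4, ← tr_smul]
    congr 1
    rw [pow_succ ((-1:ℝ)) (i+1), mul_smul, neg_one_smul, smul_neg]
  -- `key2` : consequently δ'χᵢ₊₁ has closed values
  have key2 : ∀ (i : ℕ) (χi : (Fin i → G) → A (m - i - 1))
      (χi1 : (Fin (i+1) → G) → A (m - (↑(i+1) : ℤ) - 1)),
      (∀ gs, d (m - (↑(i+1) : ℤ) - 1) (χi1 gs)
        = tr (hq i).symm (((-1:ℝ) ^ (i+2)) • gd (act (m - i - 1)) χi gs)) →
      ∀ gs, d (m - (↑(i+1) : ℤ) - 1) (gd (act (m - (↑(i+1) : ℤ) - 1)) χi1 gs) = 0 := by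
    intro i χi χi1 hdχ gs
    have hmap := gd_map (d (m - (↑(i+1) : ℤ) - 1)) (act (m - (↑(i+1) : ℤ) - 1))
      (act ((m - (↑(i+1) : ℤ) - 1) + 1)) (fun g a => hcomm _ g a) χi1
    have hfun : (fun gs => d (m - (↑(i+1) : ℤ) - 1) (χi1 gs))
        = fun gs => tr (hq i).symm (((-1:ℝ) ^ (i+2)) • gd (act (m - i - 1)) χi gs) :=
      funext hdχ
    rw [hfun, gd_tr act (hq i).symm, gd_smul, gd_gd _ (hact_mul _)] at hmap
    have := congrFun hmap.symm gs
    simpa [tr_zero] using this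
  -- closedness of the values of δ'φ_p
  have hφd := key φ n (hφ n (by omega))
  have hclosed : ∀ gs, d (m - (↑(n+1) : ℤ) - 1)
      (gd (act (m - (↑(n+1) : ℤ) - 1)) (φ (n+1)) gs) = 0 := key2 n (φ n) (φ (n+1)) hφd
  constructor
  · -- Part 1 : c = ε ∘ δ'φ_p is a cocycle
    rw [eps_gd (d (m - (↑(n+1) : ℤ) - 1)) (act (m - (↑(n+1) : ℤ) - 1)) ε hε_add hε_smul hε_inv
      (hact_closed _) _ hclosed]
    funext gs
    rw [gd_gd _ (hact_mul _)]
    simpa using eps_zero (d (m - (↑(n+1) : ℤ) - 1)) ε hε_smul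
  · -- Part 2 : independence of the choice of φ up to coboundary
    intro φ' hφ'0 hφ'
    set ψ : ∀ i : ℕ, (Fin i → G) → A (m - i - 1) := fun i gs => φ' i gs - φ i gs with hψdef
    have hψrel : ∀ i : ℕ, i + 1 ≤ n + 1 →
        gd (act (m - i - 1)) (ψ i)
          + (fun gs => tr (hq i) (gdd d (ψ (i+1)) gs)) = 0 := by
      intro i hi
      funext gs
      have h1 := congrFun (hφ i hi) gs
      have h2 := congrFun (hφ' i hi) gs
      simp only [Pi.add_apply, Pi.zero_apply] at h1 h2 ⊢
      have hgd : gd (act (m - i - 1)) (ψ i) gs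
          = gd (act (m - i - 1)) (φ' i) gs - gd (act (m - i - 1)) (φ i) gs :=
        congrFun (gd_sub (act (m - i - 1)) (φ' i) (φ i)) gs
      have hgdd : gdd d (ψ (i+1)) gs = gdd d (φ' (i+1)) gs - gdd d (φ (i+1)) gs := by
        show ((-1:ℝ) ^ (i+1)) • d _ (φ' (i+1) gs - φ (i+1) gs) = _
        rw [map_sub, smul_sub]
        rfl
      rw [hgd, hgdd, tr_sub]
      rw [show tr (hq i) (gdd d (φ' (i + 1)) gs) = - gd (act (m - i - 1)) (φ' i) gs from
        eq_neg_of_add_eq_zero_right h2]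
      rw [show tr (hq i) (gdd d (φ (i + 1)) gs) = - gd (act (m - i - 1)) (φ i) gs from
        eq_neg_of_add_eq_zero_right h1]
      abel
    have hdψ : ∀ i : ℕ, i + 1 ≤ n + 1 → ∀ gs,
        d (m - (↑(i+1) : ℤ) - 1) (ψ (i+1) gs)
          = tr (hq i).symm (((-1:ℝ) ^ (i+2)) • gd (act (m - i - 1)) (ψ i) gs) :=
      fun i hi => key ψ i (hψrel i hi)
    -- closedness of ψ 0
    have hψ0closed : ∀ gs : Fin 0 → G, d (m - (↑(0:ℕ) : ℤ) - 1) (ψ 0 gs) = 0 := by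
      intro gs
      have hgs : gs = ![] := Subsingleton.elim _ _
      have h0 : d (m - (↑(0:ℕ) : ℤ) - 1) (φ 0 ![]) = d (m - (↑(0:ℕ) : ℤ) - 1) (φ' 0 ![]) := by
        apply tr_inj (show (m - (↑(0:ℕ) : ℤ) - 1) + 1 = m from by push_cast; ring)
        have := hφ0.symm.trans hφ'0
        have h := neg_injective this
        exact h.symm ▸ rfl
      rw [hgs]
      show d _ (φ' 0 ![] - φ 0 ![]) = 0
      rw [map_sub, h0, sub_self]
    -- the main closedness computation for the inductive construction
    have hclosedPsi : ∀ (i : ℕ), i + 1 ≤ n + 1 →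
        ∀ (P : (Fin i → G) → A (m - i - 1)) (θ : (Fin i → G) → A (m - i - 2)),
        gd (act (m - i - 1)) P = 0 →
        (∀ gs, ψ i gs = P gs + tr (hq2 i) (((-1:ℝ)^i) • d (m - i - 2) (θ gs))) →
        ∀ gs, d (m - (↑(i+1):ℤ) - 1)
            (ψ (i+1) gs - tr (hq3 i) (gd (act (m - i - 2)) θ gs)) = 0 := by
      intro i hi P θ hP hInv gs
      have hgdψi : gd (act (m - i - 1)) (ψ i)
          = fun gs' => tr (hq2 i)
              (((-1:ℝ)^i) • d (m - i - 2) (gd (act (m - i - 2)) θ gs')) := by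
        have h1 : ψ i = fun gs' => P gs'
            + tr (hq2 i) (((-1:ℝ)^i) • d (m - i - 2) (θ gs')) := funext hInv
        rw [h1, gd_add]
        funext gs'
        rw [congrFun hP gs']
        rw [congrFun (gd_tr act (hq2 i)
          (fun gs'' => ((-1:ℝ)^i) • d (m - i - 2) (θ gs''))) gs']
        rw [congrFun (gd_smul (act ((m - (i:ℤ) - 2) + 1)) ((-1:ℝ)^i)
          (fun gs'' => d (m - i - 2) (θ gs''))) gs']
        rw [congrFun (gd_map (d (m - (i:ℤ) - 2)) (act (m - (i:ℤ) - 2))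
          (act ((m - (i:ℤ) - 2) + 1)) (fun g a => hcomm _ g a) θ) gs']
        simp
      have h2 := hdψ i hi gs
      rw [hgdψi] at h2
      have hone : ((-1:ℝ)^(i+2)) • (((-1:ℝ)^i)
          • d (m - i - 2) (gd (act (m - i - 2)) θ gs))
          = d (m - i - 2) (gd (act (m - i - 2)) θ gs) := by
        rw [smul_smul, ← pow_add, Even.neg_one_pow ⟨i+1, by ring⟩, one_smul]
      rw [← tr_smul, hone] at h2
      rw [map_sub, h2, d_tr d (hq3 i) (by rw [hq3 i]), tr_tr, sub_eq_zero]
    -- inductive construction of the primitive sequence θ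
    have claim : ∀ i : ℕ, i ≤ n →
        ∃ (P : (Fin i → G) → A (m - i - 1)) (θ : (Fin i → G) → A (m - i - 2)),
          gd (act (m - i - 1)) P = 0 ∧
          ∀ gs, ψ i gs = P gs + tr (hq2 i) (((-1:ℝ)^i) • d (m - i - 2) (θ gs)) := by
      intro i
      induction i with
      | zero =>
        intro _
        have hsub : (m - (↑(0:ℕ):ℤ) - 1) - 1 = m - (↑(0:ℕ):ℤ) - 2 := by ring
        have hex : ∀ gs : Fin 0 → G, ∃ b : A ((m - (↑(0:ℕ):ℤ) - 1) - 1),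
            tr (by omega) (d ((m - (↑(0:ℕ):ℤ) - 1) - 1) b) = ψ 0 gs := fun gs =>
          hexact (m - (↑(0:ℕ):ℤ) - 1) (by push_cast; omega) (by push_cast; omega)
            (ψ 0 gs) (hψ0closed gs)
        choose b hb using hex
        refine ⟨fun _ => 0, fun gs => tr hsub (b gs), gd_zero _, ?_⟩
        intro gs
        rw [pow_zero, one_smul, d_tr d hsub (by rw [hsub]), tr_tr, zero_add]
        exact (hb gs).symm
      | succ i ih =>
        intro hi1
        obtain ⟨P, θ, hP, hInv⟩ := ih (by omega)
        have hgdP' : gd (act (m - (↑(i+1):ℤ) - 1))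
            (fun gs => tr (hq3 i) (gd (act (m - i - 2)) θ gs)) = 0 := by
          rw [gd_tr act (hq3 i)]
          funext gs
          rw [congrFun (gd_gd (act (m - (i:ℤ) - 2)) (hact_mul _) θ) gs]
          simp [tr_zero]
        have hcl := hclosedPsi i (by omega) P θ hP hInv
        have hsub : (m - (↑(i+1):ℤ) - 1) - 1 = m - (↑(i+1):ℤ) - 2 := by ring
        have hex : ∀ gs : Fin (i+1) → G, ∃ bb : A ((m - (↑(i+1):ℤ) - 1) - 1),
            tr (by omega) (d ((m - (↑(i+1):ℤ) - 1) - 1) bb)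
              = ((-1:ℝ)^(i+1)) • (ψ (i+1) gs
                  - tr (hq3 i) (gd (act (m - i - 2)) θ gs)) := fun gs =>
          hexact (m - (↑(i+1):ℤ) - 1) (by push_cast; omega) (by push_cast; omega) _
            (by rw [map_smul, hcl gs, smul_zero])
        choose bb hbb using hex
        refine ⟨fun gs => tr (hq3 i) (gd (act (m - i - 2)) θ gs),
          fun gs => tr hsub (bb gs), hgdP', ?_⟩
        intro gs
        have hfin : tr (hq2 (i+1))
            (((-1:ℝ)^(i+1)) • d (m - (↑(i+1):ℤ) - 2) (tr hsub (bb gs)))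
            = ψ (i+1) gs - tr (hq3 i) (gd (act (m - i - 2)) θ gs) := by
          rw [d_tr d hsub (by rw [hsub]), ← tr_smul, tr_tr, tr_smul, hbb gs,
            smul_smul, hsq, one_smul]
        rw [hfin, add_sub_cancel]
    -- final assembly
    obtain ⟨P, θ, hP, hInv⟩ := claim n le_rfl
    have hρclosed : ∀ gs, d (m - (↑(n+1):ℤ) - 1)
        (ψ (n+1) gs - tr (hq3 n) (gd (act (m - n - 2)) θ gs)) = 0 :=
      hclosedPsi n le_rfl P θ hP hInv
    set ρ : (Fin (n+1) → G) → A (m - (↑(n+1):ℤ) - 1) :=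
      fun gs => ψ (n+1) gs - tr (hq3 n) (gd (act (m - n - 2)) θ gs) with hρdef
    have hz : gd (act (m - (↑(n+1):ℤ) - 1))
        (fun gs => tr (hq3 n) (gd (act (m - n - 2)) θ gs)) = 0 := by
      rw [gd_tr act (hq3 n)]
      funext gs
      rw [congrFun (gd_gd (act (m - (n:ℤ) - 2)) (hact_mul _) θ) gs]
      simp [tr_zero]
    have hgdρ : gd (act (m - (↑(n+1):ℤ) - 1)) ρ
        = gd (act (m - (↑(n+1):ℤ) - 1)) (ψ (n+1)) := by
      rw [hρdef, gd_sub]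
      funext gs
      rw [hz]
      simp
    have hsplit : ∀ gs, gd (act (m - (↑(n+1):ℤ) - 1)) (φ' (n+1)) gs
        = gd (act (m - (↑(n+1):ℤ) - 1)) (φ (n+1)) gs
          + gd (act (m - (↑(n+1):ℤ) - 1)) ρ gs := by
      intro gs
      have h1 : gd (act (m - (↑(n+1):ℤ) - 1)) (ψ (n+1)) gs
          = gd (act (m - (↑(n+1):ℤ) - 1)) (φ' (n+1)) gs
            - gd (act (m - (↑(n+1):ℤ) - 1)) (φ (n+1)) gs :=
        congrFun (gd_sub (act (m - (↑(n+1):ℤ) - 1)) (φ' (n+1)) (φ (n+1))) gs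
      rw [congrFun hgdρ gs, h1]
      abel
    have hgdρclosed : ∀ gs, d (m - (↑(n+1):ℤ) - 1)
        (gd (act (m - (↑(n+1):ℤ) - 1)) ρ gs) = 0 := by
      intro gs
      have hmap := gd_map (d (m - (↑(n+1):ℤ) - 1)) (act (m - (↑(n+1):ℤ) - 1))
        (act ((m - (↑(n+1):ℤ) - 1) + 1)) (fun g a => hcomm _ g a) ρ
      have h0 : (fun gs => d (m - (↑(n+1):ℤ) - 1) (ρ gs)) = fun _ => 0 := funext hρclosed
      rw [h0, gd_zero] at hmap
      have := congrFun hmap.symm gs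
      simpa using this
    have hcob := eps_gd (d (m - (↑(n+1):ℤ) - 1)) (act (m - (↑(n+1):ℤ) - 1)) ε
      hε_add hε_smul hε_inv (hact_closed _) ρ hρclosed
    refine ⟨fun gs => ε (ρ gs), ?_⟩
    funext gs
    show ε (gd (act (m - (↑(n+1):ℤ) - 1)) (φ' (n+1)) gs)
      = ε (gd (act (m - (↑(n+1):ℤ) - 1)) (φ (n+1)) gs)
        + gd (fun _ : G => (LinearMap.id : ℝ →ₗ[ℝ] ℝ)) (fun gs => ε (ρ gs)) gs
    rw [congrFun hcob gs, hsplit gs]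
    exact hε_add _ _ (hclosed gs) (hgdρclosed gs)
end

section
/- Let w be a nonzero alternating m-form on ℝⁿ. Then the m-cocycle c(a_1,…,a_m) = w(a_1,…,a_m) on the group (ℝⁿ, +) with values in the trivial module ℝ is nontrivial: there is no function b : (ℝⁿ)^{m−1} → ℝ with Db = c. Hence c defines a nonzero class in H^m((ℝⁿ,+), ℝ). -/
open scoped BigOperators

/-- Merge the `i`-th and `(i+1)`-st entries of a tuple of elements of an additive group:
the tuple `(g₁, …, g_i + g_{i+1}, …, g_{p+1})` (0-indexed). -/
def addIns {G : Type*} [Add G] {p : ℕ} (g : Fin (p + 1) → G) (i : Fin p) : Fin p → G :=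
  fun j =>
    if (j : ℕ) < (i : ℕ) then g j.castSucc
    else if (j : ℕ) = (i : ℕ) then g j.castSucc + g j.succ
    else g j.succ

/-- `D` : the group-cohomology differential on cochains of an additive group `G` with
values in the trivial `G`-module `ℝ`:
`(Df)(g₁,…,g_{p+1}) = f(g₂,…,g_{p+1}) + ∑ (-1)^i f(g₁,…,g_i + g_{i+1},…,g_{p+1})
  + (-1)^{p+1} f(g₁,…,g_p)`. -/
def DtrivA {G : Type*} [Add G] {p : ℕ} (f : (Fin p → G) → ℝ) :
    (Fin (p + 1) → G) → ℝ :=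
  fun g =>
    f (Fin.tail g)
      + ∑ i : Fin p, ((-1 : ℝ) ^ ((i : ℕ) + 1)) • f (addIns g i)
      + ((-1 : ℝ) ^ (p + 1)) • f (Fin.init g)

/-!
A multilinear form is a cocycle because `w(…, a_i + a_{i+1}, …)` splits into the two faces
omitting `a_i` and `a_{i+1}`, and the signed faces telescope.

It is not a coboundary because antisymmetrisation `f ↦ ∑_σ sign σ • f(a ∘ σ)` kills every
coboundary `Db` of a group with commutative addition: the term `b(…, a_i + a_{i+1}, …)` is
invariant under the odd transposition of `a_i` and `a_{i+1}`, and the two end terms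
`b(a_2, …, a_{m+1})` and `b(a_1, …, a_m)` are exchanged by the cyclic rotation, whose sign
`(-1)^m` cancels their coefficients `1` and `(-1)^{m+1}`. An alternating form is instead
multiplied by `(m+1)!`.
-/

open Equiv Function

lemma Fin.sum_succ_sub_castSucc {M : Type*} [AddCommGroup M] {p : ℕ} (d : Fin (p + 1) → M) :
    ∑ i : Fin p, (d i.succ - d i.castSucc) = d (Fin.last p) - d 0 := by
  rw [Finset.sum_sub_distrib, sub_eq_sub_iff_add_eq_add, add_comm, ← Fin.sum_univ_succ,
    add_comm (d _), ← Fin.sum_univ_castSucc]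

section removeNth

variable {α : Type*} {p : ℕ}

lemma Fin.removeNth_castSucc_eq_update (g : Fin (p + 1) → α) (i : Fin p) :
    Fin.removeNth i.castSucc g = update (Fin.removeNth i.succ g) i (g i.succ) := by
  funext j
  rcases lt_trichotomy j i with h | rfl | h
  · simp [update_of_ne h.ne, Fin.removeNth, Fin.succAbove_castSucc_of_lt _ _ h,
      Fin.succAbove_succ_of_le _ _ h.le]
  · simp [Fin.removeNth]
  · simp [update_of_ne h.ne', Fin.removeNth, Fin.succAbove_castSucc_of_le _ _ h.le,
      Fin.succAbove_succ_of_lt _ _ h]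

lemma Fin.removeNth_succ_comp_swap (g : Fin (p + 1) → α) (i : Fin p) :
    Fin.removeNth i.succ (g ∘ swap i.castSucc i.succ) = Fin.removeNth i.castSucc g := by
  funext j
  rcases lt_trichotomy j i with h | rfl | h
  · simp only [Fin.removeNth, comp_apply, Fin.succAbove_castSucc_of_lt _ _ h,
      Fin.succAbove_succ_of_le _ _ h.le]
    rw [swap_apply_of_ne_of_ne] <;>
      simp only [ne_eq, Fin.ext_iff, Fin.val_castSucc, Fin.val_succ] <;> omega
  · simp [Fin.removeNth]
  · simp only [Fin.removeNth, comp_apply, Fin.succAbove_castSucc_of_le _ _ h.le,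
      Fin.succAbove_succ_of_lt _ _ h]
    rw [swap_apply_of_ne_of_ne] <;>
      simp only [ne_eq, Fin.ext_iff, Fin.val_castSucc, Fin.val_succ] <;> omega

lemma Fin.update_removeNth_succ_self (g : Fin (p + 1) → α) (i : Fin p) :
    update (Fin.removeNth i.succ g) i (g i.castSucc) = Fin.removeNth i.succ g := by
  simp [Fin.removeNth]

lemma Fin.init_comp_finRotate (x : Fin (p + 1) → α) :
    Fin.init (x ∘ finRotate (p + 1)) = Fin.tail x := by
  funext j
  simp [Fin.init, Fin.tail, Fin.coeSucc_eq_succ]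

end removeNth

section addIns

variable {G : Type*} {p : ℕ}

lemma addIns_eq_update [Add G] (g : Fin (p + 1) → G) (i : Fin p) :
    addIns g i = update (Fin.removeNth i.succ g) i (g i.castSucc + g i.succ) := by
  funext j
  rcases lt_trichotomy j i with h | rfl | h
  · simp [addIns, h, update_of_ne h.ne, Fin.removeNth, Fin.succAbove_succ_of_le _ _ h.le]
  · simp [addIns]
  · simp [addIns, Fin.val_ne_iff.2 h.ne', not_lt.2 h.le, update_of_ne h.ne', Fin.removeNth,
      Fin.succAbove_succ_of_lt _ _ h]

lemma addIns_comp_swap [AddCommMagma G] (g : Fin (p + 1) → G) (i : Fin p) :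
    addIns (g ∘ swap i.castSucc i.succ) i = addIns g i := by
  rw [addIns_eq_update, addIns_eq_update, Fin.removeNth_succ_comp_swap,
    Fin.removeNth_castSucc_eq_update, update_idem]
  simp [swap_apply_left, swap_apply_right, add_comm]

end addIns

section cocycle

variable {R V : Type*} [Semiring R] [AddCommMonoid V] [Module R V] [Module R ℝ] {p : ℕ}

lemma MultilinearMap.map_addIns (w : MultilinearMap R (fun _ : Fin p => V) ℝ)
    (g : Fin (p + 1) → V) (i : Fin p) :
    w (addIns g i) = w (Fin.removeNth i.succ g) + w (Fin.removeNth i.castSucc g) := by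
  rw [addIns_eq_update, w.map_update_add, Fin.update_removeNth_succ_self,
    Fin.removeNth_castSucc_eq_update]

theorem DtrivA_multilinearMap_eq_zero (w : MultilinearMap R (fun _ : Fin p => V) ℝ) :
    DtrivA ⇑w = 0 := by
  funext g
  set d : Fin (p + 1) → ℝ := fun j => (-1) ^ (j : ℕ) * w (Fin.removeNth j g)
  have hmid (i : Fin p) :
      (-1 : ℝ) ^ ((i : ℕ) + 1) • w (addIns g i) = d i.succ - d i.castSucc := by
    simp only [w.map_addIns, d, Fin.val_succ, Fin.val_castSucc, smul_eq_mul, pow_succ]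
    ring
  have hinit : (-1 : ℝ) ^ (p + 1) • w (Fin.init g) = -d (Fin.last p) := by
    simp [d, pow_succ]
  simp only [DtrivA, hmid, hinit, Fin.sum_succ_sub_castSucc, Pi.zero_apply]
  simp [d]

end cocycle

section alternatize

variable (G : Type*) (k : ℕ)

def alternatize : ((Fin k → G) → ℝ) →ₗ[ℝ] (Fin k → G) → ℝ :=
  ∑ σ : Perm (Fin k), Perm.sign σ • LinearMap.funLeft ℝ ℝ (· ∘ σ)

variable {G k}

lemma alternatize_apply (f : (Fin k → G) → ℝ) (a : Fin k → G) :
    alternatize G k f a = ∑ σ : Perm (Fin k), Perm.sign σ • f (a ∘ σ) := by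
  simp [alternatize, LinearMap.sum_apply, Finset.sum_apply, LinearMap.funLeft_apply]

lemma alternatize_comp_perm (τ : Perm (Fin k)) (f : (Fin k → G) → ℝ) :
    alternatize G k (fun x => f (x ∘ τ)) = Perm.sign τ • alternatize G k f := by
  funext a
  simp only [alternatize_apply, Pi.smul_apply, Finset.smul_sum, smul_smul]
  rw [← Equiv.sum_comp (Equiv.mulRight τ⁻¹)]
  simp [Perm.sign_mul, mul_comm, comp_assoc]

theorem alternatize_alternatingMap {R V : Type*} [Semiring R] [AddCommMonoid V] [Module R V]
    [Module R ℝ] (w : AlternatingMap R V ℝ (Fin k)) :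
    alternatize V k w = (k.factorial : ℝ) • ⇑w := by
  funext a
  simp [alternatize_apply, w.map_perm, smul_smul, Int.units_mul_self, Fintype.card_perm]

end alternatize

theorem alternatize_DtrivA_eq_zero {G : Type*} [AddCommMagma G] {m : ℕ}
    (b : (Fin m → G) → ℝ) :
    alternatize G (m + 1) (DtrivA b) = 0 := by
  have hmid (i : Fin m) : alternatize G (m + 1) (fun x => b (addIns x i)) = 0 := by
    have h := alternatize_comp_perm (swap i.castSucc i.succ) (fun x => b (addIns x i))
    simp only [addIns_comp_swap, Perm.sign_swap (Fin.castSucc_lt_succ (i := i)).ne] at h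
    funext a
    have ha := congrFun h a
    simp only [Units.neg_smul, one_smul, Pi.neg_apply] at ha
    simp only [Pi.zero_apply]
    linarith
  have hends : alternatize G (m + 1) (fun x => b (Fin.tail x))
      = (-1 : ℝ) ^ m • alternatize G (m + 1) (fun x => b (Fin.init x)) := by
    simp only [← Fin.init_comp_finRotate,
      alternatize_comp_perm (finRotate (m + 1)) (fun x => b (Fin.init x)), sign_finRotate]
    rw [Nat.add_sub_cancel]
    ext a
    simp [Units.smul_def, zsmul_eq_mul]
  have hD : DtrivA b = (fun x => b (Fin.tail x))
      + ∑ i : Fin m, (-1 : ℝ) ^ ((i : ℕ) + 1) • (fun x => b (addIns x i))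
      + (-1 : ℝ) ^ (m + 1) • (fun x => b (Fin.init x)) := by
    funext g
    simp [DtrivA, Finset.sum_apply]
  rw [hD, map_add, map_add, map_sum, map_smul, hends]
  simp [map_smul, hmid, pow_succ]

/-- (Stated with the degree of the form written as `m + 1 ≥ 1`.)
For a nonzero alternating `(m+1)`-form `w` on `ℝⁿ`, the `(m+1)`-cocycle
`c(a₁,…,a_{m+1}) = w(a₁,…,a_{m+1})` on the group `(ℝⁿ, +)` with values in the trivial
module `ℝ` is nontrivial: there is no `b : (ℝⁿ)^m → ℝ` with `Db = c`.  Hence `c` defines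
a nonzero class in `H^{m+1}((ℝⁿ,+), ℝ)`. -/
theorem statement11 (n m : ℕ) (w : AlternatingMap ℝ (Fin n → ℝ) ℝ (Fin (m + 1)))
    (hw : w ≠ 0) :
    DtrivA (fun a : Fin (m + 1) → (Fin n → ℝ) => w a) = 0
    ∧ ¬ ∃ b : (Fin m → (Fin n → ℝ)) → ℝ,
        DtrivA b = fun a : Fin (m + 1) → (Fin n → ℝ) => w a := by
  refine ⟨DtrivA_multilinearMap_eq_zero w.toMultilinearMap, ?_⟩
  rintro ⟨b, hb⟩
  have h := alternatize_DtrivA_eq_zero b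
  rw [hb, alternatize_alternatingMap, smul_eq_zero] at h
  exact hw (AlternatingMap.ext fun a => congrFun (h.resolve_left (by positivity)) a)
end
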